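/- If M is a smooth hypersurface in ℝ^{n+1}, then there exists a closed subset J of M with empty interior in M such that a continuous (indeed smooth) unit normal vector field to M can be defined on M \ J. -/

import Mathlib

open Set

/-- `M` is a smooth embedded hypersurface of `ℝ^{n+1}`: near each of its points it is the
zero set of a smooth function with non-vanishing differential. -/
def IsSmoothHypersurface (n : ℕ) (M : Set (EuclideanSpace ℝ (Fin (n + 1)))) : Prop :=
  ∀ x ∈ M, ∃ (U : Set (EuclideanSpace ℝ (Fin (n + 1)))) (f : EuclideanSpace ℝ (Fin (n + 1)) → ℝ),
    IsOpen U ∧ x ∈ U ∧ ContDiff ℝ (⊤ : ℕ∞) f ∧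
    (∀ y ∈ U, (y ∈ M ↔ f y = 0)) ∧ (∀ y ∈ U, fderiv ℝ f y ≠ 0)

/-- `ν` is a smooth unit normal vector field to the hypersurface `M` on the set `A ⊆ M`:
it is smooth on `A`, of unit norm, and orthogonal to the tangent space `T_x M` (the kernel
of the differential of any local defining function for `M`). -/
def IsUnitNormalField (n : ℕ) (M A : Set (EuclideanSpace ℝ (Fin (n + 1))))
    (ν : EuclideanSpace ℝ (Fin (n + 1)) → EuclideanSpace ℝ (Fin (n + 1))) : Prop :=
  ContDiffOn ℝ (⊤ : ℕ∞) ν A ∧ ∀ x ∈ A, ‖ν x‖ = 1 ∧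
    ∀ (U : Set (EuclideanSpace ℝ (Fin (n + 1)))) (f : EuclideanSpace ℝ (Fin (n + 1)) → ℝ),
      IsOpen U → x ∈ U → ContDiff ℝ (⊤ : ℕ∞) f → (∀ y ∈ U, (y ∈ M ↔ f y = 0)) →
      (∀ y ∈ U, fderiv ℝ f y ≠ 0) →
      ∀ w : EuclideanSpace ℝ (Fin (n + 1)), fderiv ℝ f x w = 0 → inner ℝ (ν x) w = (0 : ℝ)

open Filter Topology in
lemma tangent_ker {E : Type*} [NormedAddCommGroup E] [NormedSpace ℝ E] [CompleteSpace E]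
    {M U V : Set E} {f g : E → ℝ} {x : E}
    (hxM : x ∈ M) (hUo : IsOpen U) (hxU : x ∈ U)
    (hf : ContDiff ℝ (⊤ : ℕ∞) f) (hfM : ∀ y ∈ U, (y ∈ M ↔ f y = 0))
    (hVo : IsOpen V) (hxV : x ∈ V)
    (hg : ContDiff ℝ (⊤ : ℕ∞) g) (hgM : ∀ y ∈ V, (y ∈ M ↔ g y = 0))
    (hg0 : fderiv ℝ g x ≠ 0) {w : E} (hw : fderiv ℝ g x w = 0) :
    fderiv ℝ f x w = 0 := by
  set g' := fderiv ℝ g x with hg'def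
  have hgs : HasStrictFDerivAt g g' x := hg.contDiffAt.hasStrictFDerivAt (by simp)
  have hsur : g'.range = ⊤ := by
    obtain ⟨v, hv⟩ : ∃ v, g' v ≠ 0 := by
      by_contra h
      push_neg at h
      exact hg0 (ContinuousLinearMap.ext fun v => by simp [h v])
    rw [eq_top_iff]
    rintro c -
    exact ⟨(c / g' v) • v, by simp [div_mul_cancel₀, hv]⟩
  set ψ : g'.ker → E := hgs.implicitFunction g g' hsur (g x) with hψdef
  have hψ0 : ψ 0 = x := hgs.implicitFunction_apply_image hsur
  have hψd : HasStrictFDerivAt ψ (g'.ker).subtypeL 0 := hgs.to_implicitFunction hsur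
  have hgψ : ∀ᶠ z : g'.ker in 𝓝 0, g (ψ z) = g x := by
    have h1 := hgs.map_implicitFunction_eq hsur
    have hc : Tendsto (fun z : g'.ker => ((g x : ℝ), z)) (𝓝 0) (𝓝 (g x, 0)) :=
      (continuous_const.prodMk continuous_id).tendsto' 0 _ rfl
    exact hc.eventually h1
  have hUV : ∀ᶠ z : g'.ker in 𝓝 0, ψ z ∈ U ∩ V := by
    apply hψd.continuousAt.preimage_mem_nhds
    rw [hψ0]
    exact (hUo.inter hVo).mem_nhds ⟨hxU, hxV⟩
  have hgx : g x = 0 := (hgM x hxV).1 hxM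
  have hfψ : ∀ᶠ z : g'.ker in 𝓝 0, f (ψ z) = 0 := by
    filter_upwards [hgψ, hUV] with z h1 h2
    exact (hfM _ h2.1).1 ((hgM _ h2.2).2 (by rw [h1, hgx]))
  have hfd : HasFDerivAt f (fderiv ℝ f x) (ψ 0) := by
    rw [hψ0]
    exact (hf.differentiable (by simp) x).hasFDerivAt
  have hcomp : HasFDerivAt (f ∘ ψ)
      ((fderiv ℝ f x).comp (g'.ker).subtypeL) 0 :=
    hfd.comp 0 hψd.hasFDerivAt
  have hzero : HasFDerivAt (f ∘ ψ) (0 : g'.ker →L[ℝ] ℝ) 0 := by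
    have h0 : HasFDerivAt (fun _ : g'.ker => (0 : ℝ))
        (0 : g'.ker →L[ℝ] ℝ) 0 := hasFDerivAt_const 0 0
    apply h0.congr_of_eventuallyEq
    filter_upwards [hfψ] with z hz
    simp [Function.comp, hz]
  have heq := hcomp.unique hzero
  have : ((fderiv ℝ f x).comp (g'.ker).subtypeL) ⟨w, LinearMap.mem_ker.2 hw⟩ = 0 := by
    rw [heq]; rfl
  simpa using this

/-- On any smooth hypersurface `M ⊆ ℝ^{n+1}` there is a closed subset `J` of `M` with
empty interior relative to `M` such that a smooth unit normal field exists on `M \ J`. -/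
theorem exists_unit_normal_off_meager_set (n : ℕ)
    (M : Set (EuclideanSpace ℝ (Fin (n + 1)))) (hM : IsSmoothHypersurface n M) :
    ∃ J ⊆ M, (∃ C : Set (EuclideanSpace ℝ (Fin (n + 1))), IsClosed C ∧ J = M ∩ C) ∧
      (∀ U : Set (EuclideanSpace ℝ (Fin (n + 1))), IsOpen U → M ∩ U ⊆ J → M ∩ U = ∅) ∧
      ∃ ν, IsUnitNormalField n M (M \ J) ν := by
  classical
  let E := EuclideanSpace ℝ (Fin (n + 1))
  set Good : Set E → Prop := fun W => IsOpen W ∧ ∃ f : E → ℝ, ContDiff ℝ (⊤ : ℕ∞) f ∧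
    (∀ y ∈ W, (y ∈ M ↔ f y = 0)) ∧ (∀ y ∈ W, fderiv ℝ f y ≠ 0) with hGoodDef
  set 𝒮 : Set (Set (Set E)) := {S | (∀ W ∈ S, Good W) ∧
    S.Pairwise fun W W' => M ∩ W ∩ (M ∩ W') = ∅} with h𝒮def
  obtain ⟨S, hS⟩ : ∃ S, Maximal (· ∈ 𝒮) S := by
    apply zorn_subset
    intro c hc hchain
    refine ⟨⋃₀ c, ⟨?_, ?_⟩, fun s hs => subset_sUnion_of_mem hs⟩
    · rintro W ⟨S, hSc, hWS⟩
      exact (hc hSc).1 W hWS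
    · rintro W ⟨S₁, hS₁, hW₁⟩ W' ⟨S₂, hS₂, hW₂⟩ hne
      rcases hchain.total hS₁ hS₂ with h | h
      · exact (hc hS₂).2 (h hW₁) hW₂ hne
      · exact (hc hS₁).2 hW₁ (h hW₂) hne
  have hSGood : ∀ W ∈ S, Good W := hS.prop.1
  have hSdisj : S.Pairwise fun W W' => M ∩ W ∩ (M ∩ W') = ∅ := hS.prop.2
  set V : Set E := ⋃₀ S with hVdef
  have hVopen : IsOpen V := isOpen_sUnion fun W hW => (hSGood W hW).1
  set J : Set E := M ∩ Vᶜ with hJdef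
  have huniq : ∀ {y : E} {W W' : Set E}, y ∈ M → W ∈ S → W' ∈ S → y ∈ W → y ∈ W' → W = W' := by
    intro y W W' hyM hW hW' hyW hyW'
    by_contra hne
    exact absurd ((show M ∩ W ∩ (M ∩ W') = ∅ from hSdisj hW hW' hne) ▸ (show y ∈ M ∩ W ∩ (M ∩ W') from ⟨⟨hyM, hyW⟩, hyM, hyW'⟩))
      (notMem_empty y)
  -- the local defining functions and normal fields
  set F : Set E → E → ℝ := fun W => if h : Good W then h.2.choose else 0 with hFdef
  have hFW : ∀ W, Good W → ContDiff ℝ (⊤ : ℕ∞) (F W) ∧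
      (∀ y ∈ W, (y ∈ M ↔ F W y = 0)) ∧ (∀ y ∈ W, fderiv ℝ (F W) y ≠ 0) := by
    intro W h
    simp only [hFdef, dif_pos h]
    exact h.2.choose_spec
  set G : Set E → E → E := fun W y => (InnerProductSpace.toDual ℝ E).symm (fderiv ℝ (F W) y)
    with hGdef
  set N : Set E → E → E := fun W y => ‖G W y‖⁻¹ • G W y with hNdef
  have hGsm : ∀ W, Good W → ContDiff ℝ (⊤ : ℕ∞) (G W) := by
    intro W h
    exact (InnerProductSpace.toDual ℝ E).symm.contDiff.comp ((hFW W h).1.fderiv_right (by simp))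
  have hGne : ∀ W, Good W → ∀ y ∈ W, G W y ≠ 0 := by
    intro W h y hy h0
    exact (hFW W h).2.2 y hy (by simpa using (InnerProductSpace.toDual ℝ E).symm.map_eq_zero_iff.1 h0)
  have hNsm : ∀ W, Good W → ∀ x ∈ W, ContDiffAt ℝ (⊤ : ℕ∞) (N W) x := by
    intro W h x hx
    have hG := (hGsm W h).contDiffAt (x := x)
    have hne := hGne W h x hx
    exact ((hG.norm ℝ hne).inv (norm_ne_zero_iff.2 hne)).smul hG
  have hNnorm : ∀ W, Good W → ∀ x ∈ W, ‖N W x‖ = 1 := by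
    intro W h x hx
    have hne := hGne W h x hx
    simp only [hNdef, norm_smul, norm_inv, norm_norm]
    exact inv_mul_cancel₀ (norm_ne_zero_iff.2 hne)
  set ν : E → E := fun y => if h : ∃ W, W ∈ S ∧ y ∈ W ∧ y ∈ M then N h.choose y else 0 with hνdef
  have hνeq : ∀ {W y : _}, W ∈ S → y ∈ W → y ∈ M → ν y = N W y := by
    intro W y hW hyW hyM
    have h : ∃ W, W ∈ S ∧ y ∈ W ∧ y ∈ M := ⟨W, hW, hyW, hyM⟩
    have hch := h.choose_spec
    rw [hνdef]
    simp only [dif_pos h]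
    rw [huniq hyM hch.1 hW hch.2.1 hyW]
  -- membership description of M \ J
  have hMJ : M \ J = M ∩ V := by
    ext y
    simp only [hJdef, mem_diff, mem_inter_iff, mem_compl_iff]
    tauto
  refine ⟨J, inter_subset_left, ⟨Vᶜ, hVopen.isClosed_compl, rfl⟩, ?_, ν, ?_, ?_⟩
  · -- empty interior
    intro U hUo hUJ
    by_contra hne
    obtain ⟨x, hxM, hxU⟩ := nonempty_iff_ne_empty.2 hne
    obtain ⟨Ux, f, hUxo, hxUx, hfsm, hfM, hf0⟩ := hM x hxM
    set W : Set E := Ux ∩ U with hWdef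
    have hWGood : Good W := ⟨hUxo.inter hUo, f, hfsm, fun y hy => hfM y hy.1,
      fun y hy => hf0 y hy.1⟩
    have hWJ : M ∩ W ⊆ J := fun y hy => hUJ ⟨hy.1, hy.2.2⟩
    have hmem : insert W S ∈ 𝒮 := by
      constructor
      · rintro W' (rfl | hW')
        · exact hWGood
        · exact hSGood _ hW'
      · rw [Set.pairwise_insert]
        refine ⟨hSdisj, fun W' hW' _ => ?_⟩
        have hdisj : M ∩ W ∩ (M ∩ W') = ∅ := by
          rw [eq_empty_iff_forall_notMem]
          rintro y ⟨hy1, hy2⟩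
          exact (hWJ hy1).2 (mem_sUnion.2 ⟨W', hW', hy2.2⟩)
        exact ⟨hdisj, by rwa [inter_comm (M ∩ W')]⟩
    have hWS : W ∈ S := hS.2 hmem (subset_insert W S) (mem_insert W S)
    exact (hUJ ⟨hxM, hxU⟩).2 (mem_sUnion.2 ⟨W, hWS, hxUx, hxU⟩)
  · -- smoothness
    rw [hMJ]
    intro x hx
    obtain ⟨W, hWS, hxW⟩ := mem_sUnion.1 hx.2
    have hG := hSGood W hWS
    have h1 : ContDiffWithinAt ℝ (⊤ : ℕ∞) (N W) ((M ∩ V) ∩ W) x :=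
      (hNsm W hG x hxW).contDiffWithinAt
    have h2 : ContDiffWithinAt ℝ (⊤ : ℕ∞) ν ((M ∩ V) ∩ W) x :=
      h1.congr (fun y hy => hνeq hWS hy.2 hy.1.1) (hνeq hWS hxW hx.1)
    exact (contDiffWithinAt_inter (hG.1.mem_nhds hxW)).1 h2
  · -- pointwise properties
    intro x hx
    rw [hMJ] at hx
    obtain ⟨W, hWS, hxW⟩ := mem_sUnion.1 hx.2
    have hG := hSGood W hWS
    have hνx : ν x = N W x := hνeq hWS hxW hx.1
    constructor
    · rw [hνx]
      exact hNnorm W hG x hxW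
    · intro U g hUo hxU hgsm hgM hg0 w hw
      have hker : fderiv ℝ (F W) x w = 0 :=
        tangent_ker hx.1 hG.1 hxW (hFW W hG).1 (hFW W hG).2.1 hUo hxU hgsm hgM (hg0 x hxU) hw
      rw [hνx]
      simp only [hNdef]
      rw [real_inner_smul_left]
      have : inner ℝ (G W x) w = (0 : ℝ) := by
        simp only [hGdef]
        rw [InnerProductSpace.toDual_symm_apply]
        exact hker
      rw [this, mul_zero]
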